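/- (Variable-topography Dirichlet-to-Neumann formula.) Let μ > 0, let Λ ⊂ ℝ² ∖ {0} be a finite set of nonzero wavevectors, let q̂₀ ∈ ℂ, and let q̂, X : Λ → ℂ. Define φ : ℝ² × ℝ → ℂ by φ(x, z) = q̂₀ + Σ_{k∈Λ} exp(i k·x)·[ q̂(k)·cosh(μ‖k‖(z+1))/cosh(μ‖k‖) + X(k)·sinh(μ‖k‖ z)/(‖k‖·cosh²(μ‖k‖)) ]. Then: (i) μ²·Δ_H φ + ∂²φ/∂z² = 0 on ℝ² × ℝ; (ii) φ(x, 0) = q̂₀ + Σ_{k∈Λ} q̂(k)·exp(i k·x) for all x ∈ ℝ²; and (iii) ∂φ/∂z(x, 0) = Σ_{k∈Λ} exp(i k·x)·[ q̂(k)·μ‖k‖·tanh(μ‖k‖) + μ·X(k)·sech²(μ‖k‖) ] for all x ∈ ℝ², where sech(t) = 1/cosh(t). -/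

import Mathlib

noncomputable section

/-- Euclidean dot product `k · x` on ℝ². -/
def dot2 (k x : ℝ × ℝ) : ℝ := k.1 * x.1 + k.2 * x.2

/-- Euclidean norm `‖k‖` on ℝ². -/
def enorm2 (k : ℝ × ℝ) : ℝ := Real.sqrt (k.1 ^ 2 + k.2 ^ 2)

/-!
Each summand of `φ` is a separated mode `exp (i k·x) · Z_k(z)`. Both `z ↦ cosh (c (z + 1))` and
`z ↦ sinh (c z)` satisfy `Z'' = c² Z`, while each horizontal second derivative multiplies
`exp (i k·x)` by `-k_j²`; with `c = μ‖k‖` the two contributions cancel mode by mode, and finite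
sums can be differentiated termwise. On the surface `sinh 0 = 0` and `cosh 0 = 1`, which gives
the Dirichlet and Neumann data.
-/

open Complex

lemma enorm2_pos {k : ℝ × ℝ} (hk : k ≠ 0) : 0 < enorm2 k := by
  refine Real.sqrt_pos.mpr ?_
  rcases k with ⟨a, b⟩
  have : a ≠ 0 ∨ b ≠ 0 := by
    by_contra! h
    exact hk (Prod.ext h.1 h.2)
  rcases this with h | h <;> positivity

lemma sq_enorm2 (k : ℝ × ℝ) : enorm2 k ^ 2 = k.1 ^ 2 + k.2 ^ 2 :=
  Real.sq_sqrt (by positivity)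

lemma hasDerivAt_const_add_sum {ι : Type*} (Λ : Finset ι) (c : ℂ) {g : ι → ℝ → ℂ} {g' : ι → ℂ}
    {x : ℝ} (hg : ∀ k, HasDerivAt (g k) (g' k) x) :
    HasDerivAt (fun s => c + ∑ k ∈ Λ, g k s) (∑ k ∈ Λ, g' k) x :=
  (HasDerivAt.fun_sum fun k _ => hg k).const_add c

lemma deriv_deriv_const_add_sum {ι : Type*} (Λ : Finset ι) (c : ℂ) {g g' : ι → ℝ → ℂ}
    (lam : ι → ℂ) (hg : ∀ k s, HasDerivAt (g k) (g' k s) s)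
    (hg' : ∀ k s, HasDerivAt (g' k) (lam k * g k s) s) (x : ℝ) :
    deriv (deriv fun s => c + ∑ k ∈ Λ, g k s) x = ∑ k ∈ Λ, lam k * g k x := by
  have h : deriv (fun s => c + ∑ k ∈ Λ, g k s) = fun s => ∑ k ∈ Λ, g' k s :=
    funext fun s => (hasDerivAt_const_add_sum Λ c fun k => hg k s).deriv
  rw [h]
  exact (HasDerivAt.fun_sum fun k _ => hg' k x).deriv

def planeWave (k x : ℝ × ℝ) : ℂ := exp (I * dot2 k x)

lemma hasDerivAt_exp_I_mul_affine (a b s : ℝ) :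
    HasDerivAt (fun t : ℝ => exp (I * ((a * t + b : ℝ) : ℂ)))
      (I * a * exp (I * ((a * s + b : ℝ) : ℂ))) s := by
  have h := ((((hasDerivAt_id s).const_mul a).add_const b).ofReal_comp.const_mul I).cexp
  simpa [mul_comm, mul_left_comm] using h

lemma hasDerivAt_planeWave_fst (k : ℝ × ℝ) (y s : ℝ) :
    HasDerivAt (fun t => planeWave k (t, y)) (I * k.1 * planeWave k (s, y)) s :=
  hasDerivAt_exp_I_mul_affine k.1 (k.2 * y) s

lemma hasDerivAt_planeWave_snd (k : ℝ × ℝ) (y s : ℝ) :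
    HasDerivAt (fun t => planeWave k (y, t)) (I * k.2 * planeWave k (y, s)) s := by
  have hdot (t : ℝ) : dot2 k (y, t) = k.2 * t + k.1 * y := by
    rw [dot2, add_comm]
  simp only [planeWave, hdot]
  exact hasDerivAt_exp_I_mul_affine k.2 (k.1 * y) s

lemma hasDerivAt_I_mul_planeWave_fst (k : ℝ × ℝ) (y s : ℝ) :
    HasDerivAt (fun t => I * k.1 * planeWave k (t, y)) (-(k.1 : ℂ) ^ 2 * planeWave k (s, y)) s :=
  ((hasDerivAt_planeWave_fst k y s).const_mul (I * k.1)).congr_deriv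
    (by linear_combination (k.1 ^ 2 * planeWave k (s, y) : ℂ) * I_sq)

lemma hasDerivAt_I_mul_planeWave_snd (k : ℝ × ℝ) (y s : ℝ) :
    HasDerivAt (fun t => I * k.2 * planeWave k (y, t)) (-(k.2 : ℂ) ^ 2 * planeWave k (y, s)) s :=
  ((hasDerivAt_planeWave_snd k y s).const_mul (I * k.2)).congr_deriv
    (by linear_combination (k.2 ^ 2 * planeWave k (y, s) : ℂ) * I_sq)

lemma cosh_ofReal_ne_zero (x : ℝ) : cosh (x : ℂ) ≠ 0 := by
  exact_mod_cast (Real.cosh_pos x).ne'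

def depthProfile (c : ℝ) (A B : ℂ) (z : ℝ) : ℂ :=
  A * cosh (c * (z + 1)) + B * sinh (c * z)

lemma hasDerivAt_depthProfile (c : ℝ) (A B : ℂ) (z : ℝ) :
    HasDerivAt (depthProfile c A B) (c * (A * sinh (c * (z + 1)) + B * cosh (c * z))) z := by
  have hlin : ∀ e : ℂ, HasDerivAt (fun w : ℂ => (c : ℂ) * (w + e)) c z := fun e => by
    simpa using ((hasDerivAt_id (z : ℂ)).add_const e).const_mul (c : ℂ)
  have h := (((hlin 1).ccosh.const_mul A).fun_add ((hlin 0).csinh.const_mul B)).comp_ofReal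
  simp only [add_zero] at h
  exact h.congr_deriv (by ring)

lemma deriv_depthProfile (c : ℝ) (A B : ℂ) :
    deriv (depthProfile c A B) = fun z : ℝ => c * (A * sinh (c * (z + 1)) + B * cosh (c * z)) :=
  funext fun z => (hasDerivAt_depthProfile c A B z).deriv

lemma hasDerivAt_deriv_depthProfile (c : ℝ) (A B : ℂ) (z : ℝ) :
    HasDerivAt (deriv (depthProfile c A B)) ((c : ℂ) ^ 2 * depthProfile c A B z) z := by
  rw [deriv_depthProfile]
  have hlin : ∀ e : ℂ, HasDerivAt (fun w : ℂ => (c : ℂ) * (w + e)) c z := fun e => by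
    simpa using ((hasDerivAt_id (z : ℂ)).add_const e).const_mul (c : ℂ)
  have h := ((((hlin 1).csinh.const_mul A).fun_add ((hlin 0).ccosh.const_mul B)).const_mul
    (c : ℂ)).comp_ofReal
  simp only [add_zero] at h
  exact h.congr_deriv (by rw [depthProfile]; ring)

lemma depthProfile_zero (c : ℝ) (A B : ℂ) : depthProfile c A B 0 = A * cosh c := by
  simp [depthProfile]

lemma hasDerivAt_depthProfile_zero (c : ℝ) (A B : ℂ) :
    HasDerivAt (depthProfile c A B) (c * (A * sinh c + B)) 0 := by
  simpa using hasDerivAt_depthProfile c A B 0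

theorem scaledLaplace_const_add_sum_planeWave_mul (μ : ℝ) (Λ : Finset (ℝ × ℝ)) (c : ℂ)
    {Z : ℝ × ℝ → ℝ → ℂ} (hZ : ∀ k, Differentiable ℝ (Z k))
    (hZ' : ∀ k s, HasDerivAt (deriv (Z k)) (((μ * enorm2 k : ℝ) : ℂ) ^ 2 * Z k s) s)
    {φ : ℝ × ℝ → ℝ → ℂ} (hφ : ∀ x z, φ x z = c + ∑ k ∈ Λ, planeWave k x * Z k z)
    (x : ℝ × ℝ) (z : ℝ) :
    (μ : ℂ) ^ 2 *
        (deriv (deriv (fun s : ℝ => φ (s, x.2) z)) x.1 +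
          deriv (deriv (fun s : ℝ => φ (x.1, s) z)) x.2) +
      deriv (deriv (fun s : ℝ => φ x s)) z = 0 := by
  simp only [hφ]
  rw [deriv_deriv_const_add_sum Λ c _
      (fun k s => (hasDerivAt_planeWave_fst k x.2 s).mul_const (Z k z))
      (fun k s => ((hasDerivAt_I_mul_planeWave_fst k x.2 s).mul_const (Z k z)).congr_deriv
        (mul_assoc _ _ _)),
    deriv_deriv_const_add_sum Λ c _
      (fun k s => (hasDerivAt_planeWave_snd k x.1 s).mul_const (Z k z))
      (fun k s => ((hasDerivAt_I_mul_planeWave_snd k x.1 s).mul_const (Z k z)).congr_deriv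
        (mul_assoc _ _ _)),
    deriv_deriv_const_add_sum Λ c _ (fun k s => (hZ k s).hasDerivAt.const_mul (planeWave k x))
      (fun k s => ((hZ' k s).const_mul (planeWave k x)).congr_deriv (mul_left_comm _ _ _)),
    ← Finset.sum_add_distrib, Finset.mul_sum, ← Finset.sum_add_distrib]
  refine Finset.sum_eq_zero fun k _ => ?_
  rw [Prod.mk.eta]
  have hk : ((enorm2 k : ℝ) : ℂ) ^ 2 = (k.1 : ℂ) ^ 2 + (k.2 : ℂ) ^ 2 := by
    exact_mod_cast sq_enorm2 k
  push_cast
  linear_combination ((μ : ℂ) ^ 2 * planeWave k x * Z k z) * hk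

theorem stmt_8_general (μ : ℝ) (Λ : Finset (ℝ × ℝ)) (hΛ : ∀ k ∈ Λ, k ≠ 0)
    (qhat₀ : ℂ) (qhat X : ℝ × ℝ → ℂ)
    (φ : ℝ × ℝ → ℝ → ℂ)
    (hφ : ∀ (x : ℝ × ℝ) (z : ℝ), φ x z =
      qhat₀ + ∑ k ∈ Λ, Complex.exp (Complex.I * (dot2 k x : ℂ)) *
        (qhat k * ((Real.cosh (μ * enorm2 k * (z + 1)) / Real.cosh (μ * enorm2 k) : ℝ) : ℂ) +
          X k *
            ((Real.sinh (μ * enorm2 k * z) /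
                (enorm2 k * Real.cosh (μ * enorm2 k) ^ 2) : ℝ) : ℂ))) :
    (∀ (x : ℝ × ℝ) (z : ℝ),
        (μ : ℂ) ^ 2 *
            (deriv (deriv (fun s : ℝ => φ (s, x.2) z)) x.1 +
              deriv (deriv (fun s : ℝ => φ (x.1, s) z)) x.2) +
          deriv (deriv (fun s : ℝ => φ x s)) z = 0) ∧
    (∀ x : ℝ × ℝ, φ x 0 =
      qhat₀ + ∑ k ∈ Λ, qhat k * Complex.exp (Complex.I * (dot2 k x : ℂ))) ∧
    (∀ x : ℝ × ℝ, deriv (fun s : ℝ => φ x s) 0 =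
      ∑ k ∈ Λ, Complex.exp (Complex.I * (dot2 k x : ℂ)) *
        (qhat k * ((μ * enorm2 k * Real.tanh (μ * enorm2 k) : ℝ) : ℂ) +
          ((μ : ℂ) * X k * ((1 / Real.cosh (μ * enorm2 k)) ^ 2 : ℝ)))) := by
  set Z : ℝ × ℝ → ℝ → ℂ := fun k => depthProfile (μ * enorm2 k)
    (qhat k / Real.cosh (μ * enorm2 k)) (X k / (enorm2 k * Real.cosh (μ * enorm2 k) ^ 2))
  have hφZ : ∀ x z, φ x z = qhat₀ + ∑ k ∈ Λ, planeWave k x * Z k z := fun x z => by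
    rw [hφ]
    congr 1
    refine Finset.sum_congr rfl fun k _ => ?_
    simp only [Z, planeWave, depthProfile]
    push_cast
    ring
  refine ⟨scaledLaplace_const_add_sum_planeWave_mul μ Λ qhat₀
    (fun k s => (hasDerivAt_depthProfile _ _ _ s).differentiableAt)
    (fun k => hasDerivAt_deriv_depthProfile _ _ _) hφZ, fun x => ?_, fun x => ?_⟩
  · rw [hφZ]
    congr 1
    refine Finset.sum_congr rfl fun k _ => ?_
    have hcosh := cosh_ofReal_ne_zero (μ * enorm2 k)
    simp only [Z, depthProfile_zero, planeWave]
    push_cast at hcosh ⊢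
    field_simp
  · simp only [hφZ]
    rw [(hasDerivAt_const_add_sum Λ qhat₀ fun k =>
      (hasDerivAt_depthProfile_zero (μ * enorm2 k) _ _).const_mul (planeWave k x)).deriv]
    refine Finset.sum_congr rfl fun k hk => ?_
    have hnorm : ((enorm2 k : ℝ) : ℂ) ≠ 0 := by exact_mod_cast (enorm2_pos (hΛ k hk)).ne'
    have hcosh := cosh_ofReal_ne_zero (μ * enorm2 k)
    simp only [planeWave, Real.tanh_eq_sinh_div_cosh]
    push_cast at hcosh ⊢
    field_simp

/-- variable-topography Dirichlet-to-Neumann formula: for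
`φ(x,z) = q̂₀ + Σ_{k∈Λ} exp(i k·x)·[ q̂(k)·cosh(μ‖k‖(z+1))/cosh(μ‖k‖)
  + X(k)·sinh(μ‖k‖ z)/(‖k‖·cosh²(μ‖k‖)) ]`,
one has `μ²·Δ_H φ + ∂²φ/∂z² = 0` on ℝ² × ℝ, surface Dirichlet data
`φ(x, 0) = q̂₀ + Σ_{k∈Λ} q̂(k)·exp(i k·x)`, and surface Neumann data
`∂φ/∂z(x, 0) = Σ_{k∈Λ} exp(i k·x)·[ q̂(k)·μ‖k‖·tanh(μ‖k‖) + μ·X(k)·sech²(μ‖k‖) ]`,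
where `sech(t) = 1/cosh(t)`. -/
theorem stmt_8 (μ : ℝ) (hμ : 0 < μ) (Λ : Finset (ℝ × ℝ)) (hΛ : ∀ k ∈ Λ, k ≠ 0)
    (qhat₀ : ℂ) (qhat X : ℝ × ℝ → ℂ)
    (φ : ℝ × ℝ → ℝ → ℂ)
    (hφ : ∀ (x : ℝ × ℝ) (z : ℝ), φ x z =
      qhat₀ + ∑ k ∈ Λ, Complex.exp (Complex.I * (dot2 k x : ℂ)) *
        (qhat k * ((Real.cosh (μ * enorm2 k * (z + 1)) / Real.cosh (μ * enorm2 k) : ℝ) : ℂ) +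
          X k *
            ((Real.sinh (μ * enorm2 k * z) /
                (enorm2 k * Real.cosh (μ * enorm2 k) ^ 2) : ℝ) : ℂ))) :
    (∀ (x : ℝ × ℝ) (z : ℝ),
        (μ : ℂ) ^ 2 *
            (deriv (deriv (fun s : ℝ => φ (s, x.2) z)) x.1 +
              deriv (deriv (fun s : ℝ => φ (x.1, s) z)) x.2) +
          deriv (deriv (fun s : ℝ => φ x s)) z = 0) ∧
    (∀ x : ℝ × ℝ, φ x 0 =
      qhat₀ + ∑ k ∈ Λ, qhat k * Complex.exp (Complex.I * (dot2 k x : ℂ))) ∧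
    (∀ x : ℝ × ℝ, deriv (fun s : ℝ => φ x s) 0 =
      ∑ k ∈ Λ, Complex.exp (Complex.I * (dot2 k x : ℂ)) *
        (qhat k * ((μ * enorm2 k * Real.tanh (μ * enorm2 k) : ℝ) : ℂ) +
          ((μ : ℂ) * X k * ((1 / Real.cosh (μ * enorm2 k)) ^ 2 : ℝ)))) :=
  stmt_8_general μ Λ hΛ qhat₀ qhat X φ hφ
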